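/- arXiv:2204.08251 — 9 statements merged into one kernel-verified Lean document; each statement's English description precedes it below -/
import Mathlib

section
/- Let n ≥ 1 and t ≥ 0 be integers and let ℓ > 0 be a real number. Let z₁, …, z_n be nonnegative integers with ∑_{j=1}^n z_j = t, and let w₁, …, w_n be nonnegative integers with ∑_{j=1}^n w_j = t such that every w_j equals ⌊t/n⌋ or ⌈t/n⌉. Then ∑_{j=1}^n (f(z_j + ℓ) − f(z_j)) ≤ ∑_{j=1}^n (f(w_j + ℓ) − f(w_j)). That is, among nonnegative integer sequences with fixed sum t, the quantity ∑_j f(z_j+ℓ) − ∑_j f(z_j) is maximized by the balanced sequence. -/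
/-!
`g x = f (x + ℓ) - f x` is concave on `[0, ∞)`, since its derivative
`log (x + ℓ) - log x` decreases. Put `q = ⌊t/n⌋` and let `L` be the line through
`(q, g q)` and `(q + 1, g (q + 1))`. By concavity `g ≤ L` at every integer point (none lies
strictly between `q` and `q + 1`), with equality at `q` and `q + 1`. As `L` is affine and
`∑ z = ∑ w`, we get `∑ g (z j) ≤ ∑ L (z j) = ∑ L (w j) = ∑ g (w j)`.
-/

open Finset

/-- `f x = x * log x` (note `Real.log 0 = 0`, so `f 0 = 0`). -/
noncomputable def f (x : ℝ) : ℝ := x * Real.log x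

theorem ConcaveOn.le_add_slope_mul_sub {𝕜 : Type*} [Field 𝕜] [LinearOrder 𝕜]
    [IsStrictOrderedRing 𝕜] {s : Set 𝕜} {g : 𝕜 → 𝕜} (hg : ConcaveOn 𝕜 s g) {a b x : 𝕜}
    (ha : a ∈ s) (hb : b ∈ s) (hx : x ∈ s) (hab : a < b) (hxab : x ∉ Set.Ioo a b) :
    g x ≤ g a + slope g a b * (x - a) := by
  rcases lt_trichotomy x a with hxa | rfl | hax
  · have hslope : slope g a b ≤ slope g a x :=
      hg.slope_anti ha ⟨hx, hxa.ne⟩ ⟨hb, hab.ne'⟩ (hxa.trans hab).le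
    rw [slope_def_field g a x, le_div_iff_of_neg (sub_neg.2 hxa)] at hslope
    linarith
  · simp
  · have hbx : b ≤ x := not_lt.1 fun hxb => hxab ⟨hax, hxb⟩
    have hslope : slope g a x ≤ slope g a b :=
      hg.slope_anti ha ⟨hb, hab.ne'⟩ ⟨hx, hax.ne'⟩ hbx
    rw [slope_def_field g a x, div_le_iff₀ (sub_pos.2 hax)] at hslope
    linarith

theorem ConcaveOn.sum_le_sum_of_forall_eq_or_eq_succ {ι : Type*} [Fintype ι] {g : ℝ → ℝ}
    (hg : ConcaveOn ℝ (Set.Ici 0) g) {z w : ι → ℕ} {q : ℕ} (hsum : ∑ i, z i = ∑ i, w i)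
    (hw : ∀ i, w i = q ∨ w i = q + 1) :
    ∑ i, g (z i) ≤ ∑ i, g (w i) := by
  set L : ℝ → ℝ := fun x => g q + slope g q (q + 1) * (x - q) with hL
  have hz_le : ∀ i, g (z i) ≤ L (z i) := fun i => by
    refine hg.le_add_slope_mul_sub (by simp) (by simp; positivity) (by simp) (by simp) ?_
    rintro ⟨h₁, h₂⟩
    norm_cast at h₁ h₂
    omega
  have hw_eq : ∀ i, g (w i) = L (w i) := fun i => by
    rcases hw i with h | h <;> simp [hL, h, slope_def_field]
  have hsum' : ∑ i, (z i : ℝ) = ∑ i, (w i : ℝ) := by exact_mod_cast hsum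
  calc ∑ i, g (z i) ≤ ∑ i, L (z i) := sum_le_sum fun i _ => hz_le i
    _ = ∑ i, L (w i) := by
      simp only [hL, sum_add_distrib, ← mul_sum, sum_sub_distrib, hsum']
    _ = ∑ i, g (w i) := sum_congr rfl fun i _ => (hw_eq i).symm

theorem concaveOn_f_add_sub_f {ℓ : ℝ} (hℓ : 0 ≤ ℓ) :
    ConcaveOn ℝ (Set.Ici 0) fun x => f (x + ℓ) - f x := by
  have hderiv : ∀ x : ℝ, 0 < x →
      HasDerivAt (fun x => f (x + ℓ) - f x) (Real.log (x + ℓ) - Real.log x) x := fun x hx => by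
    have h := ((Real.hasDerivAt_mul_log (by positivity : x + ℓ ≠ 0)).comp_add_const x ℓ).sub
      (Real.hasDerivAt_mul_log hx.ne')
    rwa [add_sub_add_right_eq_sub] at h
  refine AntitoneOn.concaveOn_of_deriv (convex_Ici 0)
    ((Real.continuous_mul_log.comp (continuous_add_const ℓ)).sub
      Real.continuous_mul_log).continuousOn ?_ ?_ <;> rw [interior_Ici]
  · exact fun x hx => (hderiv x hx).differentiableAt.differentiableWithinAt
  · intro x hx y hy hxy
    have hx : (0 : ℝ) < x := hx
    have hy : (0 : ℝ) < y := hy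
    rw [(hderiv x hx).deriv, (hderiv y hy).deriv]
    have hcross : Real.log (y + ℓ) + Real.log x ≤ Real.log (x + ℓ) + Real.log y := by
      rw [← Real.log_mul (by positivity) hx.ne', ← Real.log_mul (by positivity) hy.ne']
      exact Real.log_le_log (by positivity) (by nlinarith)
    linarith

/-- Among nonnegative integer sequences `z` with fixed sum `t`, the quantity
`∑ j, f (z j + ℓ) - ∑ j, f (z j)` is maximized by the balanced sequence, i.e. any
sequence `w` with sum `t` all of whose entries are `⌊t/n⌋` or `⌈t/n⌉`. -/
theorem balanced_maximizes_shift_sum (n t : ℕ) (hn : 1 ≤ n) (ℓ : ℝ) (hℓ : 0 < ℓ)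
    (z w : Fin n → ℕ)
    (hz : ∑ j, z j = t) (hw : ∑ j, w j = t)
    (hbal : ∀ j, w j = t / n ∨ w j = (t + n - 1) / n) :
    ∑ j, (f ((z j : ℝ) + ℓ) - f (z j)) ≤ ∑ j, (f ((w j : ℝ) + ℓ) - f (w j)) := by
  have hceil_le : (t + n - 1) / n ≤ t / n + 1 :=
    (Nat.div_le_div_right (by omega)).trans (Nat.add_div_right t hn).le
  have hfloor_le : t / n ≤ (t + n - 1) / n := Nat.div_le_div_right (by omega)
  refine (concaveOn_f_add_sub_f hℓ.le).sum_le_sum_of_forall_eq_or_eq_succ (q := t / n)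
    (hz.trans hw.symm) fun j => ?_
  rcases hbal j with h | h <;> omega
end

section
/- For every tree T on n ≥ 2 vertices, h(T) ≤ (n−1)·log(n−1) = h(S_n); that is, among all trees of order n, the star S_n maximizes h. -/
/-!
`f` is convex and vanishes at `1`, and every degree of a tree on `n ≥ 2` vertices lies in
`[1, n - 1]`, so `f (deg v)` lies below the secant through `(1, 0)` and `(n - 1, f (n - 1))`.
The secant bound is linear in the degree, so its sum depends only on `∑ v, (deg v - 1) = n - 2`,
which is the same for all trees; it equals `f (n - 1)`, the value of the star.
-/

open Finset

lemma f_one : f 1 = 0 := by simp [f]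

lemma f_le_secant_from_one {x m : ℝ} (hx : 1 ≤ x) (hxm : x ≤ m) :
    f x ≤ (x - 1) / (m - 1) * f m := by
  rcases hx.eq_or_lt with rfl | hx
  · simp [f_one]
  have hm : 1 < m := hx.trans_le hxm
  have hslope := Real.convexOn_mul_log.secant_mono (a := 1) (by simp)
    (Set.mem_Ici.2 (by linarith)) (Set.mem_Ici.2 (by linarith)) hx.ne' hm.ne' hxm
  have hslope' : f x / (x - 1) ≤ f m / (m - 1) := by simpa [f] using hslope
  calc f x = (x - 1) * (f x / (x - 1)) := by field_simp [(sub_pos.2 hx).ne']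
    _ ≤ (x - 1) * (f m / (m - 1)) := by gcongr
    _ = (x - 1) / (m - 1) * f m := by ring

namespace SimpleGraph

variable {V : Type*} [Fintype V] {G : SimpleGraph V} [DecidableRel G.Adj]

lemma IsTree.sum_degree_sub_one (hG : G.IsTree) :
    ∑ v, ((G.degree v : ℝ) - 1) = Fintype.card V - 2 := by
  have hedges := hG.card_edgeFinset
  have hdegrees : ∑ v, (G.degree v : ℝ) = 2 * #G.edgeFinset := by
    exact_mod_cast G.sum_degrees_eq_twice_card_edges
  rw [sum_sub_distrib, hdegrees, sum_const, card_univ, ← hedges]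
  push_cast
  ring

end SimpleGraph

/-- Among all trees of order `n ≥ 2`, the star `S_n` maximizes `h`:
`h(T) ≤ (n-1) * log (n-1) = h(S_n)`. -/
theorem star_maximizes_h_trees {V : Type*} [Fintype V] (T : SimpleGraph V)
    [DecidableRel T.Adj] (n : ℕ) (hn : 2 ≤ n) (hcard : Fintype.card V = n)
    (htree : T.IsTree) :
    ∑ v, f (T.degree v) ≤ ((n : ℝ) - 1) * Real.log ((n : ℝ) - 1) := by
  have : Nontrivial V := Fintype.one_lt_card_iff_nontrivial.1 (by omega)
  have hdeg_pos (v : V) : 1 ≤ (T.degree v : ℝ) := by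
    exact_mod_cast htree.connected.preconnected.degree_pos_of_nontrivial v
  have hdeg_le (v : V) : (T.degree v : ℝ) ≤ n - 1 := by
    have := T.degree_lt_card_verts v
    rw [le_sub_iff_add_le]
    exact_mod_cast (by omega : T.degree v + 1 ≤ n)
  calc ∑ v, f (T.degree v)
      ≤ ∑ v, ((T.degree v : ℝ) - 1) / ((n - 1) - 1) * f (n - 1) :=
        sum_le_sum fun v _ ↦ f_le_secant_from_one (hdeg_pos v) (hdeg_le v)
    _ = ((n : ℝ) - 2) / ((n - 1) - 1) * f (n - 1) := by
        rw [← sum_mul, ← sum_div, htree.sum_degree_sub_one, hcard]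
    _ = f (n - 1) := by
        rcases hn.eq_or_lt with rfl | hn
        · norm_num [f_one]
        · rw [sub_sub, one_add_one_eq_two, div_self (by norm_cast; omega), one_mul]
end

section
/- For every tree T on n ≥ 2 vertices, h(T) ≥ 2(n−2)·log 2 = h(P_n); that is, among all trees of order n, the path P_n minimizes h. -/
open Finset

lemma key (d : ℕ) (hd : 1 ≤ d) : 2 * ((d : ℝ) - 1) * Real.log 2 ≤ f d := by
  unfold f
  rcases lt_or_ge d 4 with h4 | h4
  · interval_cases d
    · simp
    · norm_num
    · -- 3 log 3 ≥ 4 log 2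
      have h : Real.log 16 ≤ Real.log 27 := Real.log_le_log (by norm_num) (by norm_num)
      have h16 : Real.log 16 = 4 * Real.log 2 := by
        rw [show (16:ℝ) = 2 ^ 4 by norm_num, Real.log_pow]; push_cast; ring
      have h27 : Real.log 27 = 3 * Real.log 3 := by
        rw [show (27:ℝ) = 3 ^ 3 by norm_num, Real.log_pow]; push_cast; ring
      rw [h16, h27] at h
      norm_num
      linarith
  · have hlog : 2 * Real.log 2 ≤ Real.log d := by
      rw [show 2 * Real.log 2 = Real.log 4 by
        rw [show (4:ℝ) = 2 ^ 2 by norm_num, Real.log_pow]; push_cast; ring]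
      exact Real.log_le_log (by norm_num) (by exact_mod_cast h4)
    have hd4 : (4:ℝ) ≤ d := by exact_mod_cast h4
    nlinarith [Real.log_nonneg (show (1:ℝ) ≤ 2 by norm_num)]

/-- Among all trees of order `n ≥ 2`, the path `P_n` minimizes `h`:
`h(T) ≥ 2 * (n-2) * log 2 = h(P_n)`. -/
theorem path_minimizes_h_trees {V : Type*} [Fintype V] (T : SimpleGraph V)
    [DecidableRel T.Adj] (n : ℕ) (hn : 2 ≤ n) (hcard : Fintype.card V = n)
    (htree : T.IsTree) :
    2 * ((n : ℝ) - 2) * Real.log 2 ≤ ∑ v, f (T.degree v) := by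
  have hdeg : ∀ v : V, 1 ≤ T.degree v := by
    intro v
    rw [Nat.one_le_iff_ne_zero, ← Nat.pos_iff_ne_zero, T.degree_pos_iff_exists_adj]
    obtain ⟨w, hw⟩ := Fintype.exists_ne_of_one_lt_card (by omega : 1 < Fintype.card V) v
    obtain ⟨p⟩ := htree.isConnected.preconnected v w
    cases p with
    | nil => exact absurd rfl hw
    | cons h q => exact ⟨_, h⟩
  have hsum : ∑ v, T.degree v = 2 * (n - 1) := by
    rw [T.sum_degrees_eq_twice_card_edges]
    have := htree.card_edgeFinset
    omega
  have hsumR : ∑ v, (T.degree v : ℝ) = 2 * (n : ℝ) - 2 := by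
    rw [← Nat.cast_sum, hsum]
    have h1 : 1 ≤ n := by omega
    push_cast [h1]
    ring
  have h1 : ∑ v, 2 * ((T.degree v : ℝ) - 1) * Real.log 2
      = 2 * Real.log 2 * ∑ v, ((T.degree v : ℝ) - 1) := by
    rw [Finset.mul_sum]; exact Finset.sum_congr rfl fun v _ => by ring
  have h2 : ∑ v, ((T.degree v : ℝ) - 1) = (n : ℝ) - 2 := by
    rw [Finset.sum_sub_distrib, hsumR]
    simp [hcard]
    ring
  have := Finset.sum_le_sum (fun v (_ : v ∈ Finset.univ) => key _ (hdeg v))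
  rw [h1, h2] at this
  linarith
end

section
/- Let T be a tree on n ≥ 5 vertices that is not a path. Then h(T) ≥ 3·log 3 + 2(n−4)·log 2, with equality if and only if T has exactly 3 leaves. In particular, the second smallest value of h among trees of order n is attained precisely by the trees with 3 leaves (all of which have degree sequence (3,2,…,2,1,1,1)). -/
/-!
By convexity of `f`, every positive integer `k` satisfies `f k ≥ fMinorant k`, with equality for
`k ≤ 3`. In a tree with `n` vertices and `L` leaves, `∑ (deg v - 1) = n - 2` and
`∑ (deg v - 2)⁺ = L - 2`, so `h(T) ≥ 2 (n - 2) log 2 + (L - 2) (3 log 3 - 4 log 2)`. A tree with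
only two leaves has maximum degree two and is a path, so `L ≥ 3`. Equality forces `L = 3`;
conversely, since every degree is at most `L`, a tree with three leaves has all degrees at most
`3`, where `fMinorant = f`.
-/

open Finset

open Real

lemma three_mul_log_three_sub_four_mul_log_two_pos : 0 < 3 * log 3 - 4 * log 2 := by
  have h : log (2 ^ 4) < log (3 ^ 3) := log_lt_log (by norm_num) (by norm_num)
  rw [log_pow, log_pow] at h
  push_cast at h
  linarith

/-- For `k ≥ 2` this is the secant of `f` through `2` and `3`; the truncated `k - 2` makes it
vanish at `k = 1`. -/
noncomputable def fMinorant (k : ℕ) : ℝ :=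
  2 * log 2 * (k - 1) + (k - 2 : ℕ) * (3 * log 3 - 4 * log 2)

lemma fMinorant_eq_f {k : ℕ} (hk₁ : 1 ≤ k) (hk₃ : k ≤ 3) : fMinorant k = f k := by
  interval_cases k <;> norm_num [fMinorant, f]
  ring

lemma fMinorant_le_f {k : ℕ} (hk : 1 ≤ k) : fMinorant k ≤ f k := by
  rcases le_or_gt k 3 with hk₃ | hk₃
  · exact (fMinorant_eq_f hk hk₃).le
  have hslope := convexOn_mul_log.slope_mono_adjacent (x := 2) (y := 3) (z := k)
    (by norm_num) (Set.mem_Ici.mpr k.cast_nonneg) (by norm_num) (by exact_mod_cast hk₃)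
  have hk' : (3 : ℝ) < k := by exact_mod_cast hk₃
  rw [le_div_iff₀ (by linarith)] at hslope
  simp only [fMinorant, f, Nat.cast_sub (by omega : 2 ≤ k)]
  push_cast
  linarith

namespace SimpleGraph
variable {V : Type*} {G : SimpleGraph V}

lemma Walk.IsPath.adj_toSubgraph_of_degree_le_two [Fintype V] [DecidableRel G.Adj] {u v : V}
    {p : G.Walk u v} (hp : p.IsPath) (hnil : ¬ p.Nil) (hu : G.degree u = 1)
    (hv : G.degree v = 1) (hdeg : ∀ w, G.degree w ≤ 2) :
    ∀ x ∈ p.toSubgraph.verts, ∀ y, G.Adj x y → p.toSubgraph.Adj x y := by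
  intro x hx y hxy
  suffices G.degree x ≤ (p.toSubgraph.neighborSet x).ncard by
    have hsub := p.toSubgraph.neighborSet_subset x
    rw [← card_neighborSet_eq_degree, ← Nat.card_eq_fintype_card, Nat.card_coe_set_eq] at this
    rw [← Subgraph.mem_neighborSet, Set.eq_of_subset_of_ncard_le hsub this]
    exact hxy
  obtain ⟨i, rfl, hi⟩ := Walk.mem_support_iff_exists_getVert.mp (p.mem_verts_toSubgraph.mp hx)
  rcases Nat.eq_zero_or_pos i with rfl | hi0
  · rw [Walk.getVert_zero, hp.neighborSet_toSubgraph_startpoint hnil, Set.ncard_singleton, hu]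
  rcases hi.lt_or_eq with hi | rfl
  · rw [hp.ncard_neighborSet_toSubgraph_internal_eq_two hi0.ne' hi]
    exact hdeg _
  · rw [Walk.getVert_length, hp.neighborSet_toSubgraph_endpoint hnil, Set.ncard_singleton, hv]

theorem IsTree.nonempty_iso_pathGraph [Fintype V] [Nontrivial V] [DecidableRel G.Adj]
    (hG : G.IsTree) (hdeg : ∀ v, G.degree v ≤ 2) :
    Nonempty (G ≃g pathGraph (Fintype.card V)) := by
  classical
  obtain ⟨u, v, huv, hu, hv⟩ := hG.exists_ne_and_degree_eq_one
  obtain ⟨p, hp⟩ := hG.connected.exists_isPath u v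
  have hadj := hp.adj_toSubgraph_of_degree_le_two (p.not_nil_of_ne huv) hu hv hdeg
  have hverts (x : V) : x ∈ p.toSubgraph.verts :=
    (hG.connected u x).mem_subgraphVerts hadj p.start_mem_verts_toSubgraph
  have htop : p.toSubgraph = ⊤ := by
    ext x y
    · simpa using hverts x
    · exact ⟨fun h ↦ h.adj_sub, hadj x (hverts x) y⟩
  let e : G ≃g pathGraph (p.length + 1) :=
    (htop ▸ Subgraph.topIso.symm).trans hp.pathGraphIsoToSubgraph.symm
  rw [show Fintype.card V = p.length + 1 by simpa using Fintype.card_congr e.toEquiv]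
  exact ⟨e⟩

variable [Fintype V] [DecidableRel G.Adj]

lemma IsTree.sum_degrees_add_two (hG : G.IsTree) : ∑ v, G.degree v + 2 = 2 * Fintype.card V := by
  rw [sum_degrees_eq_twice_card_edges, ← hG.card_edgeFinset]
  ring

/-- Here `G.degree v - 2` is truncated subtraction: it vanishes at leaves. -/
lemma IsTree.card_filter_degree_eq_one [Nontrivial V] (hG : G.IsTree) :
    #{v | G.degree v = 1} = ∑ v, (G.degree v - 2) + 2 := by
  have key (v : V) : G.degree v - 2 + 2 = G.degree v + if G.degree v = 1 then 1 else 0 := by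
    have := hG.preconnected.degree_pos_of_nontrivial v
    split_ifs <;> omega
  have hsum := sum_congr rfl fun v (_ : v ∈ univ) ↦ key v
  rw [sum_add_distrib, sum_add_distrib, ← card_filter, sum_const, card_univ, smul_eq_mul] at hsum
  have := hG.sum_degrees_add_two
  omega

lemma IsTree.degree_le_card_filter_degree_eq_one [Nontrivial V] (hG : G.IsTree) (v : V) :
    G.degree v ≤ #{w | G.degree w = 1} := by
  rw [hG.card_filter_degree_eq_one]
  have := single_le_sum (f := fun w ↦ G.degree w - 2) (fun _ _ ↦ Nat.zero_le _) (mem_univ v)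
  omega

lemma IsTree.three_le_card_filter_degree_eq_one [Nontrivial V] (hG : G.IsTree)
    (hG' : ¬ Nonempty (G ≃g pathGraph (Fintype.card V))) : 3 ≤ #{v | G.degree v = 1} := by
  by_contra! h
  exact hG' <| hG.nonempty_iso_pathGraph fun v ↦ by
    have := hG.degree_le_card_filter_degree_eq_one v
    omega

lemma IsTree.sum_fMinorant_degree [Nontrivial V] (hG : G.IsTree) :
    ∑ v, fMinorant (G.degree v) = 2 * log 2 * (Fintype.card V - 2) +
      (#{v | G.degree v = 1} - 2 : ℝ) * (3 * log 3 - 4 * log 2) := by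
  have hdeg : ∑ v, (G.degree v : ℝ) + 2 = 2 * Fintype.card V := by
    exact_mod_cast hG.sum_degrees_add_two
  have hleaf : (#{v | G.degree v = 1} : ℝ) = ∑ v, ((G.degree v - 2 : ℕ) : ℝ) + 2 := by
    exact_mod_cast hG.card_filter_degree_eq_one
  simp only [fMinorant, sum_add_distrib, ← mul_sum, ← sum_mul, sum_sub_distrib, sum_const,
    card_univ, nsmul_eq_mul, hleaf]
  linear_combination 2 * log 2 * hdeg

end SimpleGraph

theorem second_smallest_h_trees_general {V : Type*} [Fintype V]
    (T : SimpleGraph V) [DecidableRel T.Adj] (n : ℕ) (hn : 5 ≤ n)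
    (hcard : Fintype.card V = n) (htree : T.IsTree)
    (hnotpath : ¬ Nonempty (T ≃g SimpleGraph.pathGraph n)) :
    3 * Real.log 3 + 2 * ((n : ℝ) - 4) * Real.log 2 ≤ ∑ v, f (T.degree v) ∧
    (∑ v, f (T.degree v) = 3 * Real.log 3 + 2 * ((n : ℝ) - 4) * Real.log 2 ↔
      (Finset.univ.filter fun v => T.degree v = 1).card = 3) := by
  subst hcard
  have : Nontrivial V := Fintype.one_lt_card_iff_nontrivial.mp (by omega)
  have hpos (v : V) : 1 ≤ T.degree v := htree.preconnected.degree_pos_of_nontrivial v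
  have hc := three_mul_log_three_sub_four_mul_log_two_pos
  have hL : (3 : ℝ) ≤ #{v | T.degree v = 1} := by
    exact_mod_cast htree.three_le_card_filter_degree_eq_one hnotpath
  have hsum := htree.sum_fMinorant_degree
  have hle : ∑ v, fMinorant (T.degree v) ≤ ∑ v, f (T.degree v) :=
    sum_le_sum fun v _ ↦ fMinorant_le_f (hpos v)
  refine ⟨by nlinarith, fun heq ↦ ?_, fun hL₃ ↦ ?_⟩
  · have : (#{v | T.degree v = 1} : ℝ) ≤ 3 := by nlinarith
    exact_mod_cast le_antisymm this hL
  · have hdeg (v : V) : T.degree v ≤ 3 := hL₃ ▸ htree.degree_le_card_filter_degree_eq_one v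
    rw [← sum_congr rfl fun v _ ↦ fMinorant_eq_f (hpos v) (hdeg v), hsum, hL₃]
    push_cast
    ring

/-- For a tree `T` on `n ≥ 5` vertices that is not a path,
`h(T) ≥ 3 log 3 + 2(n-4) log 2`, with equality iff `T` has exactly `3` leaves.
Thus the second smallest value of `h` among trees of order `n` is attained precisely by the
trees with `3` leaves. -/
theorem second_smallest_h_trees {V : Type*} [Fintype V] [DecidableEq V]
    (T : SimpleGraph V) [DecidableRel T.Adj] (n : ℕ) (hn : 5 ≤ n)
    (hcard : Fintype.card V = n) (htree : T.IsTree)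
    (hnotpath : ¬ Nonempty (T ≃g SimpleGraph.pathGraph n)) :
    3 * Real.log 3 + 2 * ((n : ℝ) - 4) * Real.log 2 ≤ ∑ v, f (T.degree v) ∧
    (∑ v, f (T.degree v) = 3 * Real.log 3 + 2 * ((n : ℝ) - 4) * Real.log 2 ↔
      (Finset.univ.filter fun v => T.degree v = 1).card = 3) :=
  second_smallest_h_trees_general T n hn hcard htree hnotpath
end

section
/- Let m ≥ 1 and let G be a finite simple graph with m edges and no isolated vertices such that h(G) ≥ h(G') for every finite simple graph G' with m edges. Then G is a threshold graph: the vertices of G can be partitioned into a set K inducing a clique and a set S that is a stable (independent) set, such that the neighborhoods of the vertices of S are nested (i.e., for any u, v ∈ S, N(u) ⊆ N(v) or N(v) ⊆ N(u)). -/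
/-!
Moving an edge `vy` to `uy`, where `deg v ≤ deg u` and `u ≁ y`, keeps the number of edges and
changes the degrees `(deg u, deg v)` into `(deg u + 1, deg v - 1)`; by strict convexity of
`x log x` this strictly increases `h`. Hence in a maximizer `N(v) ⊆ N[u]` whenever
`deg v ≤ deg u`, i.e. the vicinal preorder is total. A graph with a total vicinal preorder is a
threshold graph: take for `K` the vertices adjacent to every vertex above them in the preorder,
and for `S` the rest.
-/

open Finset

theorem StrictConvexOn.add_lt_add_sub_add {φ : ℝ → ℝ} {s : Set ℝ}
    (hφ : StrictConvexOn ℝ s φ) {a b d : ℝ} (hd : 0 < d) (hba : b ≤ a) (hb : b - d ∈ s)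
    (ha : a + d ∈ s) :
    φ b + φ a < φ (b - d) + φ (a + d) := by
  -- `b` and `a` are convex combinations of `b - d` and `a + d` with the same two weights, swapped
  obtain ⟨L, hL, hLdef⟩ : ∃ L, 0 < L ∧ L = a - b + 2 * d := ⟨_, by linarith, rfl⟩
  have hμ : 0 < (a - b + d) / L := div_pos (by linarith) hL
  have hν : 0 < d / L := div_pos hd hL
  have hμν : (a - b + d) / L + d / L = 1 := by field_simp; linarith
  have hne : b - d ≠ a + d := (by linarith : b - d < a + d).ne
  have hb' := hφ.2 hb ha hne hμ hν hμν
  have ha' := hφ.2 hb ha hne hν hμ (by rw [add_comm]; exact hμν)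
  simp only [smul_eq_mul] at hb' ha'
  rw [show (a - b + d) / L * (b - d) + d / L * (a + d) = b by field_simp; rw [hLdef]; ring] at hb'
  rw [show d / L * (b - d) + (a - b + d) / L * (a + d) = a by field_simp; rw [hLdef]; ring] at ha'
  calc φ b + φ a < _ := add_lt_add hb' ha'
    _ = φ (b - d) + φ (a + d) := by linear_combination (φ (b - d) + φ (a + d)) * hμν

theorem strictConvexOn_f : StrictConvexOn ℝ (Set.Ici 0) f := Real.strictConvexOn_mul_log

theorem sum_f_lt_sum_f_of_transfer {V : Type*} [Fintype V] {d d' : V → ℕ} {u v : V}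
    (huv : u ≠ v) (hu : d' u = d u + 1) (hv : d' v + 1 = d v)
    (hw : ∀ w, w ≠ u ∧ w ≠ v → d' w = d w) (hvu : d v ≤ d u) :
    ∑ w, f (d w) < ∑ w, f (d' w) := by
  have hconv := strictConvexOn_f.add_lt_add_sub_add one_pos (b := d v) (a := d u)
    (by exact_mod_cast hvu)
    (Set.mem_Ici.2 (sub_nonneg.2 (by exact_mod_cast (by omega : 1 ≤ d v))))
    (Set.mem_Ici.2 (by positivity))
  rw [show (d v : ℝ) - 1 = d' v by rw [← hv]; push_cast; ring] at hconv
  rw [← sub_pos, ← sum_sub_distrib,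
    Fintype.sum_eq_add u v huv fun w hw' => by rw [hw w hw', sub_self], hu]
  push_cast
  linarith

namespace SimpleGraph

theorem Iso.sum_degree_eq {V W : Type*} {G : SimpleGraph V} {G' : SimpleGraph W}
    [Fintype V] [Fintype W] [DecidableRel G.Adj] [DecidableRel G'.Adj] (e : G ≃g G')
    {M : Type*} [AddCommMonoid M] (φ : ℕ → M) :
    ∑ v, φ (G.degree v) = ∑ w, φ (G'.degree w) :=
  Fintype.sum_equiv e.toEquiv _ _ fun v => by simp

variable {V : Type*} (G : SimpleGraph V)

def replaceEdge (e e' : Sym2 V) : SimpleGraph V := fromEdgeSet (insert e' (G.edgeSet \ {e}))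

def VicinalLE (a b : V) : Prop := G.neighborSet a ⊆ insert b (G.neighborSet b)

theorem edgeFinset_replaceEdge [DecidableEq V] [Fintype G.edgeSet] {e e' : Sym2 V}
    [Fintype (G.replaceEdge e e').edgeSet] (he' : ¬ e'.IsDiag) :
    (G.replaceEdge e e').edgeFinset = insert e' (G.edgeFinset.erase e) := by
  ext x
  rw [mem_edgeFinset, replaceEdge, edgeSet_fromEdgeSet]
  have := G.not_isDiag_of_mem_edgeSet (e := x)
  aesop

theorem card_edgeFinset_replaceEdge [DecidableEq V] [Fintype G.edgeSet] {e e' : Sym2 V}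
    [Fintype (G.replaceEdge e e').edgeSet] (he : e ∈ G.edgeSet) (he' : e' ∉ G.edgeSet)
    (hd : ¬ e'.IsDiag) : #(G.replaceEdge e e').edgeFinset = #G.edgeFinset := by
  rw [G.edgeFinset_replaceEdge hd, card_insert_of_notMem (by simp [he']),
    card_erase_add_one (by simpa using he)]

theorem degree_replaceEdge_add [Fintype V] [DecidableEq V] [DecidableRel G.Adj] {e e' : Sym2 V}
    [DecidableRel (G.replaceEdge e e').Adj] (he : e ∈ G.edgeSet) (he' : e' ∉ G.edgeSet)
    (hd : ¬ e'.IsDiag) (w : V) :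
    (G.replaceEdge e e').degree w + (if w ∈ e then 1 else 0) =
      G.degree w + (if w ∈ e' then 1 else 0) := by
  simp only [← card_incidenceFinset_eq_degree, incidenceFinset_eq_filter,
    G.edgeFinset_replaceEdge hd, filter_insert, filter_erase]
  set N := {x ∈ G.edgeFinset | w ∈ x}
  have hN : #(N.erase e) + (if w ∈ e then 1 else 0) = #N := by
    split_ifs with h
    · exact card_erase_add_one (mem_filter.2 ⟨by simpa using he, h⟩)
    · rw [erase_eq_of_notMem fun h' : e ∈ N => h (mem_filter.1 h').2, add_zero]
  have he'N : e' ∉ N.erase e := fun h =>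
    he' (by simpa using (mem_filter.1 (mem_of_mem_erase h)).1)
  by_cases h : w ∈ e'
  · rw [if_pos h, if_pos h, card_insert_of_notMem he'N]
    omega
  · rw [if_neg h, if_neg h]
    omega

theorem sum_f_degree_lt_replaceEdge [Fintype V] [DecidableEq V] [DecidableRel G.Adj]
    {u v y : V} [DecidableRel (G.replaceEdge s(v, y) s(u, y)).Adj] (huv : u ≠ v) (hyu : y ≠ u)
    (hvy : G.Adj v y) (huy : ¬ G.Adj u y) (hdeg : G.degree v ≤ G.degree u) :
    ∑ w, f (G.degree w) < ∑ w, f ((G.replaceEdge s(v, y) s(u, y)).degree w) := by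
  have hH := G.degree_replaceEdge_add (e := s(v, y)) (e' := s(u, y)) hvy
    (by simpa using huy) (by simpa using hyu.symm)
  refine sum_f_lt_sum_f_of_transfer huv (by simpa [huv, hyu.symm] using hH u)
    (by simpa [huv.symm, hvy.ne] using hH v) (fun w hw => ?_) hdeg
  simpa [hw.1, hw.2] using hH w

theorem vicinalLE_of_degree_le [Fintype V] [DecidableRel G.Adj] [Fintype G.edgeSet]
    (hmax : ∀ (H : SimpleGraph V) [DecidableRel H.Adj] [Fintype H.edgeSet],
      #H.edgeFinset = #G.edgeFinset → ∑ v, f (H.degree v) ≤ ∑ v, f (G.degree v))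
    {a b : V} (hab : G.degree a ≤ G.degree b) : G.VicinalLE a b := by
  classical
  intro x hax
  by_contra hx
  simp only [Set.mem_insert_iff, mem_neighborSet, not_or] at hx
  have hba : b ≠ a := by rintro rfl; exact hx.2 hax
  have hcard := G.card_edgeFinset_replaceEdge (e := s(a, x)) (e' := s(b, x)) hax
    (by simpa using hx.2) (by simpa using Ne.symm hx.1)
  exact (hmax _ hcard).not_gt (G.sum_f_degree_lt_replaceEdge hba hx.1 hax hx.2 hab)

theorem exists_threshold_partition_of_vicinalLE_total
    (htot : ∀ a b, G.VicinalLE a b ∨ G.VicinalLE b a) :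
    ∃ K S : Set V, K ∪ S = Set.univ ∧ K ∩ S = ∅ ∧
      G.IsClique K ∧
      (∀ u ∈ S, ∀ v ∈ S, u ≠ v → ¬ G.Adj u v) ∧
      (∀ u ∈ S, ∀ v ∈ S, G.neighborSet u ⊆ G.neighborSet v ∨
        G.neighborSet v ⊆ G.neighborSet u) := by
  set K : Set V := {a | ∀ b, a ≠ b → G.VicinalLE a b → G.Adj a b}
  have mem_K : ∀ a b, G.Adj a b → G.VicinalLE a b → b ∈ K := by
    intro a b hab hle w hbw hbw'
    rcases hbw' hab.symm with rfl | haw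
    · exact hab.symm
    · exact (hle haw.symm).resolve_left hbw.symm
  have hS : ∀ a ∈ Kᶜ, ∀ b ∈ Kᶜ, a ≠ b → ¬ G.Adj a b := fun a ha b hb _ hab =>
    (htot a b).elim (fun h => hb (mem_K a b hab h)) (fun h => ha (mem_K b a hab.symm h))
  refine ⟨K, Kᶜ, Set.union_compl_self K, Set.inter_compl_self K, ?_, hS, ?_⟩
  · intro a ha b hb hab
    exact (htot a b).elim (ha b hab) fun h => (hb a hab.symm h).symm
  · intro a ha b hb
    rcases eq_or_ne a b with rfl | hab
    · exact .inl subset_rfl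
    refine (htot a b).imp (fun h x hx => ?_) (fun h x hx => ?_)
    · exact (h hx).resolve_left (by rintro rfl; exact hS a ha x hb hab hx)
    · exact (h hx).resolve_left (by rintro rfl; exact hS x ha b hb hab hx.symm)

end SimpleGraph

theorem h_maximizer_is_threshold_general {V : Type*} [Fintype V] (G : SimpleGraph V)
    [DecidableRel G.Adj] [Fintype G.edgeSet]
    (m : ℕ) (hedges : G.edgeFinset.card = m)
    (hmax : ∀ (W : Type) [Fintype W] [DecidableEq W] (G' : SimpleGraph W)
      [DecidableRel G'.Adj], G'.edgeFinset.card = m →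
        ∑ w, f (G'.degree w) ≤ ∑ v, f (G.degree v)) :
    ∃ K S : Set V, K ∪ S = Set.univ ∧ K ∩ S = ∅ ∧
      G.IsClique K ∧
      (∀ u ∈ S, ∀ v ∈ S, u ≠ v → ¬ G.Adj u v) ∧
      (∀ u ∈ S, ∀ v ∈ S, G.neighborSet u ⊆ G.neighborSet v ∨
        G.neighborSet v ⊆ G.neighborSet u) := by
  classical
  have hmax' : ∀ (H : SimpleGraph V) [DecidableRel H.Adj] [Fintype H.edgeSet],
      #H.edgeFinset = #G.edgeFinset → ∑ v, f (H.degree v) ≤ ∑ v, f (G.degree v) := by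
    intro H _ _ hH
    let e := H.overFinIso rfl
    rw [e.sum_degree_eq fun n : ℕ => f n]
    exact hmax _ _ (e.card_edgeFinset_eq.symm.trans (hH.trans hedges))
  exact G.exists_threshold_partition_of_vicinalLE_total fun a b =>
    (le_total _ _).imp (G.vicinalLE_of_degree_le hmax') (G.vicinalLE_of_degree_le hmax')

/-- If `G` has `m ≥ 1` edges, no isolated vertices, and maximizes
`h(G) = ∑ v, f (deg v)` among all graphs with `m` edges, then `G` is a threshold graph:
its vertex set is partitioned into a clique `K` and a stable set `S` such that the
neighborhoods of the vertices of `S` are nested. -/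
theorem h_maximizer_is_threshold {V : Type*} [Fintype V] (G : SimpleGraph V)
    [DecidableRel G.Adj] [Fintype G.edgeSet]
    (m : ℕ) (hm : 1 ≤ m) (hedges : G.edgeFinset.card = m)
    (hniso : ∀ v, 0 < G.degree v)
    (hmax : ∀ (W : Type) [Fintype W] [DecidableEq W] (G' : SimpleGraph W)
      [DecidableRel G'.Adj], G'.edgeFinset.card = m →
        ∑ w, f (G'.degree w) ≤ ∑ v, f (G.degree v)) :
    ∃ K S : Set V, K ∪ S = Set.univ ∧ K ∩ S = ∅ ∧
      G.IsClique K ∧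
      (∀ u ∈ S, ∀ v ∈ S, u ≠ v → ¬ G.Adj u v) ∧
      (∀ u ∈ S, ∀ v ∈ S, G.neighborSet u ⊆ G.neighborSet v ∨
        G.neighborSet v ⊆ G.neighborSet u) :=
  h_maximizer_is_threshold_general G m hedges hmax
end

section
/- Let m ≥ 1 and let G be a finite simple graph with m edges and no isolated vertices such that h(G) ≥ h(G') for every finite simple graph G' with m edges. Then G is connected. -/
/-!
If `G` is not connected, let `u` be a vertex of minimum degree, `v` a neighbour of `u` and `w` a
vertex outside the component of `u`. Replacing the edge `uv` by `vw` keeps the number of edges,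
leaves the degree of `v` unchanged, and moves one unit of degree from `u` to `w`. Since `f` is
strictly convex its increments `f (k + 1) - f k` strictly increase, and `deg u - 1 < deg w`, so
`h` strictly increases, contradicting maximality.
-/

open Finset

lemma f_succ_sub_f_strictMono : StrictMono fun k : ℕ => f (k + 1) - f k := by
  refine strictMono_nat_of_lt_succ fun k => ?_
  have h := Real.strictConvexOn_mul_log.slope_strict_mono_adjacent
    (x := (k : ℝ)) (y := k + 1) (z := k + 2)
    (by simp) (by simp; positivity) (by linarith) (by linarith)
  simp only [f]
  push_cast
  convert h using 1 <;> ring_nf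

lemma sum_f_lt_sum_f_of_move_unit {ι : Type*} [Fintype ι] [DecidableEq ι] {d d' : ι → ℕ}
    {u w : ι} (huw : u ≠ w) (hle : d u ≤ d w)
    (hd : ∀ x, d' x + (if x = u then 1 else 0) = d x + (if x = w then 1 else 0)) :
    ∑ x, f (d x) < ∑ x, f (d' x) := by
  have hu : d u = d' u + 1 := by simpa [huw] using (hd u).symm
  have hw : d' w = d w + 1 := by simpa [huw.symm] using hd w
  have hincr : f (d' u + 1) - f (d' u) < f (d w + 1) - f (d w) := by
    exact_mod_cast f_succ_sub_f_strictMono (show d' u < d w by omega)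
  have hdiff : ∑ x, (f (d' x) - f (d x)) = (f (d' u) - f (d u)) + (f (d' w) - f (d w)) :=
    Fintype.sum_eq_add u w huw fun x ⟨hxu, hxw⟩ => by
      simp [show d' x = d x by simpa [hxu, hxw] using hd x]
  rw [sum_sub_distrib, hu, hw] at hdiff
  push_cast at hdiff
  linarith

lemma Finset.card_filter_insert_erase_add {α : Type*} [DecidableEq α] (p : α → Prop)
    [DecidablePred p] {s : Finset α} {a b : α} (ha : a ∈ s) (hb : b ∉ s.erase a) :
    #{x ∈ insert b (s.erase a) | p x} + (if p a then 1 else 0) =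
      #{x ∈ s | p x} + (if p b then 1 else 0) := by
  rw [card_filter, card_filter, sum_insert hb, ← add_sum_erase _ _ ha]
  ring

namespace SimpleGraph

variable {V : Type*} (G : SimpleGraph V)

theorem exists_not_reachable_of_not_preconnected (h : ¬G.Preconnected) (u : V) :
    ∃ w, ¬G.Reachable u w := by
  by_contra! hall
  exact h fun a b => (hall a).symm.trans (hall b)

variable [Fintype V] [DecidableRel G.Adj]

variable {G} in
theorem Iso.sum_comp_degree {W : Type*} [Fintype W] {G' : SimpleGraph W} [DecidableRel G'.Adj]
    (e : G ≃g G') {M : Type*} [AddCommMonoid M] (φ : ℕ → M) :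
    ∑ x, φ (G'.degree x) = ∑ x, φ (G.degree x) := by
  rw [← e.toEquiv.sum_comp]
  simp

section MoveEdge

variable [DecidableEq V] [Fintype G.edgeSet] {u v w : V}

def moveEdge (u v w : V) : SimpleGraph V := G \ edge u v ⊔ edge v w

instance : DecidableRel (G.moveEdge u v w).Adj :=
  inferInstanceAs (DecidableRel (G \ edge u v ⊔ edge v w).Adj)

theorem edgeFinset_moveEdge (huv : u ≠ v) (hvw : v ≠ w) :
    (G.moveEdge u v w).edgeFinset = insert s(v, w) (G.edgeFinset.erase s(u, v)) := by
  ext e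
  rw [mem_edgeFinset, moveEdge, edgeSet_sup, edgeSet_sdiff, edgeSet_edge_of_ne huv,
    edgeSet_edge_of_ne hvw]
  simp [and_comm]

variable {G}

theorem card_edgeFinset_moveEdge (huv : G.Adj u v) (hvw : ¬G.Adj v w) (hne : v ≠ w) :
    #(G.moveEdge u v w).edgeFinset = #G.edgeFinset := by
  rw [edgeFinset_moveEdge G huv.ne hne, card_insert_of_notMem (by simp [hvw]),
    card_erase_add_one (by simpa using huv)]

theorem degree_moveEdge_add (huv : G.Adj u v) (hvw : ¬G.Adj v w) (hne : v ≠ w) (x : V) :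
    (G.moveEdge u v w).degree x + (if x = u then 1 else 0) =
      G.degree x + (if x = w then 1 else 0) := by
  have huw : u ≠ w := by rintro rfl; exact hvw huv.symm
  have huv' : u ≠ v := huv.ne
  have key := card_filter_insert_erase_add (x ∈ ·) (s := G.edgeFinset) (a := s(u, v))
    (b := s(v, w)) (by simpa using huv) (by simp [hvw])
  rw [← incidenceFinset_eq_filter, card_incidenceFinset_eq_degree,
    ← edgeFinset_moveEdge G huv' hne, ← incidenceFinset_eq_filter,
    card_incidenceFinset_eq_degree] at key
  simp only [Sym2.mem_iff] at key
  split_ifs at key ⊢ <;> grind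

end MoveEdge

end SimpleGraph

open SimpleGraph in
/-- If `G` has `m ≥ 1` edges, no isolated vertices, and maximizes
`h(G) = ∑ v, f (deg v)` among all graphs with `m` edges, then `G` is connected. -/
theorem h_maximizer_is_connected {V : Type*} [Fintype V] (G : SimpleGraph V)
    [DecidableRel G.Adj] [Fintype G.edgeSet]
    (m : ℕ) (hm : 1 ≤ m) (hedges : G.edgeFinset.card = m)
    (hniso : ∀ v, 0 < G.degree v)
    (hmax : ∀ (W : Type) [Fintype W] [DecidableEq W] (G' : SimpleGraph W)
      [DecidableRel G'.Adj], G'.edgeFinset.card = m →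
        ∑ w, f (G'.degree w) ≤ ∑ v, f (G.degree v)) :
    G.Connected := by
  classical
  obtain ⟨e, -⟩ := card_pos.1 (hedges ▸ hm : 0 < #G.edgeFinset)
  have : Nonempty V := ⟨e.out.1⟩
  refine ⟨not_not.1 fun hpre => ?_⟩
  obtain ⟨u, hu⟩ := G.exists_minimal_degree_vertex
  obtain ⟨w, huw⟩ := G.exists_not_reachable_of_not_preconnected hpre u
  obtain ⟨v, huv⟩ := (G.degree_pos_iff_exists_adj u).1 (hniso u)
  have hvw : ¬G.Adj v w := fun h => huw (huv.reachable.trans h.reachable)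
  have hne : v ≠ w := by rintro rfl; exact huw huv.reachable
  have hlt := sum_f_lt_sum_f_of_move_unit (by rintro rfl; exact huw .rfl)
    (hu ▸ G.minDegree_le_degree w) (degree_moveEdge_add huv hvw hne)
  set G' := G.moveEdge u v w
  have hle := hmax _ (G'.overFin rfl)
    (by rw [← (G'.overFinIso rfl).card_edgeFinset_eq, card_edgeFinset_moveEdge huv hvw hne, hedges])
  rw [(G'.overFinIso rfl).sum_comp_degree fun k : ℕ => f k] at hle
  exact hle.not_gt hlt
end

section
/- Let k ≥ 3 and let a ≥ 1, a' ≥ 2, b, b' be integers with 0 ≤ b ≤ b' ≤ k−3 and C(k−1,2) + a(k−1) + b = C(k−2,2) + a'(k−2) + b'. Then f(k−2+a') − f(k−3+a') + f(b'+1) − f(b') ≥ f(k−1+a) − f(k−2+a) + f(b+1) − f(b). (Consequently, if h(C(m,k)) ≤ h(C(m,k−1)) and the parameters satisfy b ≤ b' < k−2, then also h(C(m+1,k)) ≤ h(C(m+1,k−1)).) -/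
/-!
`f` is convex on `[0, ∞)`, so its unit increments `f (x + 1) - f x` increase with `x`. The
identity between the two expansions of `m` forces `a < a'`, hence `k - 2 + a ≤ k - 3 + a'`, and
`b ≤ b'` holds by assumption; the inequality is the sum of the two resulting comparisons.
-/

open Set

theorem ConvexOn.map_add_sub_map_le {𝕜 : Type*} [Field 𝕜] [LinearOrder 𝕜] [IsStrictOrderedRing 𝕜]
    {s : Set 𝕜} {g : 𝕜 → 𝕜} (hg : ConvexOn 𝕜 s g) {x y d : 𝕜} (hx : x ∈ s) (hy : y + d ∈ s)
    (hxy : x ≤ y) (hd : 0 ≤ d) : g (x + d) - g x ≤ g (y + d) - g y := by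
  rcases (add_nonneg (sub_nonneg.2 hxy) hd).eq_or_lt with hL | hL
  · obtain rfl : d = 0 := by linarith
    simp
  -- Both `x + d` and `y` are convex combinations of `x` and `y + d`, with swapped weights.
  set L := y - x + d
  have hu : 0 ≤ (y - x) / L := div_nonneg (sub_nonneg.2 hxy) hL.le
  have hv : 0 ≤ d / L := div_nonneg hd hL.le
  have hsum : (y - x) / L + d / L = 1 := by rw [← add_div]; exact div_self hL.ne'
  have hxd_comb := hg.2 hx hy hu hv hsum
  have hy_comb := hg.2 hx hy hv hu (by rw [add_comm, hsum])
  have ex : ((y - x) / L) • x + (d / L) • (y + d) = x + d := by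
    simp only [smul_eq_mul]; field_simp; ring
  have ey : (d / L) • x + ((y - x) / L) • (y + d) = y := by
    simp only [smul_eq_mul]; field_simp; ring
  rw [ex] at hxd_comb
  rw [ey] at hy_comb
  simp only [smul_eq_mul] at hxd_comb hy_comb
  have hgx : (y - x) / L * g x + d / L * g x = g x := by rw [← add_mul, hsum, one_mul]
  have hgy : d / L * g (y + d) + (y - x) / L * g (y + d) = g (y + d) := by
    rw [← add_mul, add_comm, hsum, one_mul]
  linarith

theorem convexOn_f : ConvexOn ℝ (Ici 0) f := Real.convexOn_mul_log

theorem add_two_choose_two (n : ℕ) : (n + 2).choose 2 = (n + 1).choose 2 + (n + 1) := by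
  rw [Nat.choose_succ_succ', Nat.choose_one_right, add_comm]

theorem lt_of_add_mul_add_eq {n a b a' b' : ℕ} (hb' : b' ≤ n)
    (h : n + 1 + a * (n + 2) + b = a' * (n + 1) + b') : a < a' := by
  by_contra! h'
  nlinarith [Nat.mul_le_mul_right (n + 1) h']

theorem increment_comparison_up_general (k a b a' b' : ℕ) (hk : 3 ≤ k)
    (hbb' : b ≤ b') (hb' : b' ≤ k - 3)
    (hm : (k - 1).choose 2 + a * (k - 1) + b = (k - 2).choose 2 + a' * (k - 2) + b') :
    f ((k : ℝ) - 1 + a) - f ((k : ℝ) - 2 + a) + f ((b : ℝ) + 1) - f b ≤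
      f ((k : ℝ) - 2 + a') - f ((k : ℝ) - 3 + a') + f ((b' : ℝ) + 1) - f b' := by
  obtain ⟨n, rfl⟩ : ∃ n, k = n + 3 := ⟨k - 3, by omega⟩
  simp only [Nat.add_sub_cancel, show n + 3 - 1 = n + 2 by omega, show n + 3 - 2 = n + 1 by omega,
    add_two_choose_two] at hm hb'
  have haa' : (a : ℝ) + 1 ≤ a' := by
    exact_mod_cast lt_of_add_mul_add_eq (a := a) (b := b) hb' (by omega)
  have hk' : (3 : ℝ) ≤ ((n + 3 : ℕ) : ℝ) := by exact_mod_cast hk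
  have hA := convexOn_f.map_add_sub_map_le (x := ((n + 3 : ℕ) : ℝ) - 2 + a)
    (y := ((n + 3 : ℕ) : ℝ) - 3 + a') (d := 1)
    (by simp only [mem_Ici]; linarith [a.cast_nonneg (α := ℝ)])
    (by simp only [mem_Ici]; linarith) (by linarith) zero_le_one
  have hB := convexOn_f.map_add_sub_map_le (x := (b : ℝ)) (y := b') (d := 1)
    (by simp) (by simp only [mem_Ici]; positivity) (by exact_mod_cast hbb') zero_le_one
  ring_nf at hA hB ⊢
  linarith

/-- For `k ≥ 3`, `a ≥ 1`, `a' ≥ 2`, `0 ≤ b ≤ b' ≤ k-3` with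
`C(k-1,2) + a(k-1) + b = C(k-2,2) + a'(k-2) + b'`:
`f(k-2+a') - f(k-3+a') + f(b'+1) - f(b') ≥ f(k-1+a) - f(k-2+a) + f(b+1) - f(b)`,
comparing the increments `h(C(m+1,k)) - h(C(m,k))` and `h(C(m+1,k-1)) - h(C(m,k-1))`. -/
theorem increment_comparison_up (k a b a' b' : ℕ) (hk : 3 ≤ k)
    (ha : 1 ≤ a) (ha' : 2 ≤ a') (hbb' : b ≤ b') (hb' : b' ≤ k - 3)
    (hm : (k - 1).choose 2 + a * (k - 1) + b = (k - 2).choose 2 + a' * (k - 2) + b') :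
    f ((k : ℝ) - 1 + a) - f ((k : ℝ) - 2 + a) + f ((b : ℝ) + 1) - f b ≤
      f ((k : ℝ) - 2 + a') - f ((k : ℝ) - 3 + a') + f ((b' : ℝ) + 1) - f b' :=
  increment_comparison_up_general k a b a' b' hk hbb' hb' hm
end

section
/- Let k ≥ 4 and let a ≥ 1, a' ≥ 3, b, b' be integers with 0 < b' < b ≤ k−2 and C(k−1,2) + a(k−1) + b = C(k−2,2) + a'(k−2) + b'. Then f(k−1+a) − f(k−2+a) + f(b) − f(b−1) ≥ f(k−2+a') − f(k−3+a') + f(b') − f(b'−1). (Consequently, if h(C(m,k)) ≤ h(C(m,k−1)) and the parameters satisfy 0 < b' < b, then also h(C(m−1,k)) ≤ h(C(m−1,k−1)).) -/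
open Real Set

noncomputable def fDiff (x : ℝ) : ℝ := f x - f (x - 1)

lemma continuous_fDiff : Continuous fDiff :=
  continuous_mul_log.sub (continuous_mul_log.comp (continuous_sub_right 1))

lemma hasDerivAt_fDiff {x : ℝ} (hx : 1 < x) : HasDerivAt fDiff (log x - log (x - 1)) x := by
  have h : HasDerivAt (fun t => f t - f (t - 1)) (log x + 1 - (log (x - 1) + 1) * 1) x :=
    (hasDerivAt_mul_log (by linarith)).sub
      ((hasDerivAt_mul_log (by linarith)).comp x ((hasDerivAt_id x).sub_const 1))
  rwa [show log x + 1 - (log (x - 1) + 1) * 1 = log x - log (x - 1) by ring] at h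

lemma inv_le_log_sub_log_sub_one {x : ℝ} (hx : 1 < x) : x⁻¹ ≤ log x - log (x - 1) := by
  have h := one_sub_inv_le_log_of_pos (x := x / (x - 1)) (by apply div_pos <;> linarith)
  rw [log_div (by linarith) (by linarith), inv_div, one_sub_div (by linarith)] at h
  simpa using h

lemma log_sub_log_sub_one_le_inv {x : ℝ} (hx : 1 < x) : log x - log (x - 1) ≤ (x - 1)⁻¹ := by
  have h := log_le_sub_one_of_pos (x := x / (x - 1)) (by apply div_pos <;> linarith)
  rw [log_div (by linarith) (by linarith), div_sub_one (by linarith)] at h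
  simpa using h

lemma exists_fDiff_sub_eq {x y : ℝ} (hx : 1 ≤ x) (hxy : x < y) :
    ∃ c ∈ Ioo x y, fDiff y - fDiff x = (log c - log (c - 1)) * (y - x) := by
  obtain ⟨c, hc, hslope⟩ := exists_hasDerivAt_eq_slope fDiff (fun t => log t - log (t - 1)) hxy
    continuous_fDiff.continuousOn fun t ht => hasDerivAt_fDiff (hx.trans_lt ht.1)
  refine ⟨c, hc, ?_⟩
  rw [hslope, div_mul_cancel₀ _ (sub_ne_zero.mpr hxy.ne')]

lemma fDiff_sub_le {x y : ℝ} (hx : 1 < x) (hxy : x ≤ y) :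
    fDiff y - fDiff x ≤ (y - x) / (x - 1) := by
  rcases hxy.eq_or_lt with rfl | hxy
  · simp
  obtain ⟨c, hc, hfc⟩ := exists_fDiff_sub_eq hx.le hxy
  have hc1 : 1 < c := hx.trans hc.1
  calc fDiff y - fDiff x = (log c - log (c - 1)) * (y - x) := hfc
    _ ≤ (c - 1)⁻¹ * (y - x) :=
      mul_le_mul_of_nonneg_right (log_sub_log_sub_one_le_inv hc1) (by linarith)
    _ ≤ (x - 1)⁻¹ * (y - x) := by gcongr; linarith [hc.1]
    _ = (y - x) / (x - 1) := by ring

lemma div_le_fDiff_sub {x y : ℝ} (hx : 1 ≤ x) (hxy : x ≤ y) :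
    (y - x) / y ≤ fDiff y - fDiff x := by
  rcases hxy.eq_or_lt with rfl | hxy
  · simp
  obtain ⟨c, hc, hfc⟩ := exists_fDiff_sub_eq hx hxy
  have hc1 : 1 < c := hx.trans_lt hc.1
  calc (y - x) / y = y⁻¹ * (y - x) := by ring
    _ ≤ c⁻¹ * (y - x) := by gcongr; linarith [hc.2]
    _ ≤ (log c - log (c - 1)) * (y - x) :=
      mul_le_mul_of_nonneg_right (inv_le_log_sub_log_sub_one hc1) (by linarith)
    _ = fDiff y - fDiff x := hfc.symm

lemma choose_two_pred {n : ℕ} (hn : 1 ≤ n) : n.choose 2 = (n - 1).choose 2 + (n - 1) := by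
  obtain ⟨m, rfl⟩ := Nat.exists_eq_add_of_le' hn
  rw [Nat.choose_succ_succ', Nat.choose_one_right, add_tsub_cancel_right, add_comm]

theorem increment_comparison_down_general (k a b a' b' : ℕ) (hk : 4 ≤ k)
    (hb'pos : 0 < b') (hb'b : b' < b) (hb : b ≤ k - 2)
    (hm : (k - 1).choose 2 + a * (k - 1) + b = (k - 2).choose 2 + a' * (k - 2) + b') :
    f ((k : ℝ) - 2 + a') - f ((k : ℝ) - 3 + a') + f b' - f ((b' : ℝ) - 1) ≤
      f ((k : ℝ) - 1 + a) - f ((k : ℝ) - 2 + a) + f b - f ((b : ℝ) - 1) := by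
  rw [choose_two_pred (by omega : 1 ≤ k - 1), show k - 1 - 1 = k - 2 by omega] at hm
  have hmR : ((k : ℝ) - 2) + a * ((k : ℝ) - 1) + b = a' * ((k : ℝ) - 2) + b' := by
    have := congrArg (Nat.cast : ℕ → ℝ) hm
    push_cast [Nat.cast_sub (by omega : 2 ≤ k), Nat.cast_sub (by omega : 1 ≤ k)] at this
    linarith
  have hkR : (4 : ℝ) ≤ k := by exact_mod_cast hk
  have hb'R : (1 : ℝ) ≤ b' := by exact_mod_cast hb'pos
  have hb'bR : (b' : ℝ) + 1 ≤ b := by exact_mod_cast hb'b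
  have hbR : (b : ℝ) ≤ k - 2 := by
    rw [← Nat.cast_ofNat, ← Nat.cast_sub (by omega)]; exact_mod_cast hb
  have haR : (0 : ℝ) ≤ a := a.cast_nonneg
  set X : ℝ := k - 1 + a
  set X' : ℝ := k - 2 + a'
  have hgap : (X' - X) * ((k : ℝ) - 2) = a + (b - b') := by linarith
  have hXX' : X ≤ X' := by nlinarith
  have key : (X' - X) / (X - 1) ≤ (b - b') / b := by
    rw [div_le_div_iff₀ (by linarith) (by linarith)]
    nlinarith
  have hup := fDiff_sub_le (by linarith : 1 < X) hXX'
  have hlow := div_le_fDiff_sub hb'R (by linarith : (b' : ℝ) ≤ b)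
  rw [show (k : ℝ) - 3 + a' = X' - 1 by ring, show (k : ℝ) - 2 + a = X - 1 by ring]
  unfold fDiff at hup hlow
  linarith

/-- For `k ≥ 4`, `a ≥ 1`, `a' ≥ 3`, `0 < b' < b ≤ k-2` with
`C(k-1,2) + a(k-1) + b = C(k-2,2) + a'(k-2) + b'`:
`f(k-1+a) - f(k-2+a) + f(b) - f(b-1) ≥ f(k-2+a') - f(k-3+a') + f(b') - f(b'-1)`,
comparing the increments `h(C(m,k)) - h(C(m-1,k))` and `h(C(m,k-1)) - h(C(m-1,k-1))`. -/
theorem increment_comparison_down (k a b a' b' : ℕ) (hk : 4 ≤ k)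
    (ha : 1 ≤ a) (ha' : 3 ≤ a') (hb'pos : 0 < b') (hb'b : b' < b) (hb : b ≤ k - 2)
    (hm : (k - 1).choose 2 + a * (k - 1) + b = (k - 2).choose 2 + a' * (k - 2) + b') :
    f ((k : ℝ) - 2 + a') - f ((k : ℝ) - 3 + a') + f b' - f ((b' : ℝ) - 1) ≤
      f ((k : ℝ) - 1 + a) - f ((k : ℝ) - 2 + a) + f b - f ((b : ℝ) - 1) :=
  increment_comparison_down_general k a b a' b' hk hb'pos hb'b hb hm
end

section
/- Let k ≥ 3 and let a be an integer with 0 ≤ a ≤ k−2. Then (k−2)·f(k+a−1) + (a+2)·f(k−2) ≤ (k−2−a)·f(k+a−1) + (a+1)·f(k−2+a) + a·f(k−1) + f(k−2−a), and the inequality is strict when a > 0. Equivalently, a·[f(k+a−1) − f(k+a−2) − f(k−1) + f(k−2)] ≤ f(k−2+a) + f(k−2−a) − 2·f(k−2), strict for a > 0. (This is the case m = C(k−2,2) + (a+2)(k−2) = C(k−1,2) + a(k−1) + (k−2−a) of the comparison h(C(m,k)) ≥ h(C(m,k−1)).) -/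
/-!
Write `n = k - 2` and `A = a`. The claim becomes
`A * (Δf (n + A) - Δf n) ≤ f (n + A) + f (n - A) - 2 f n` with `Δf x = f (x + 1) - f x`.
Since `Δf - log` is strictly decreasing (its derivative is `log (1 + 1/x) - 1/x < 0`), the left side
is less than `A * log ((n + A) / n)` when `A > 0`. That is at most the right side: the difference
vanishes at `A = 0` and has derivative `log (n / (n - A)) - A / (n + A) ≥ A / n - A / (n + A) ≥ 0`.
-/

open Real Set

lemma hasDerivAt_f {x : ℝ} (hx : x ≠ 0) : HasDerivAt f (log x + 1) x :=
  hasDerivAt_mul_log hx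

lemma strictAntiOn_f_add_one_sub_f_sub_log :
    StrictAntiOn (fun x => f (x + 1) - f x - log x) (Ioi 0) := by
  refine strictAntiOn_of_hasDerivWithinAt_neg (convex_Ioi 0) ?_
    (f' := fun x => log (x + 1) - log x - x⁻¹) (fun x hx => ?_) (fun x hx => ?_)
  · have hf : Continuous f := continuous_mul_log
    exact ((hf.comp (continuous_add_const 1)).sub hf).continuousOn.sub
      (continuousOn_log.mono fun x hx => (mem_Ioi.mp hx).ne')
  · rw [interior_Ioi, mem_Ioi] at hx
    exact ((((hasDerivAt_f (by linarith : x + 1 ≠ 0)).comp_add_const x 1).sub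
      (hasDerivAt_f hx.ne')).sub (hasDerivAt_log hx.ne')).hasDerivWithinAt.congr_deriv (by ring)
  · rw [interior_Ioi, mem_Ioi] at hx
    have hlog := log_lt_sub_one_of_pos (by positivity : 0 < (x + 1) / x)
      (by rw [ne_eq, div_eq_one_iff_eq hx.ne']; linarith)
    rw [log_div (by positivity) hx.ne'] at hlog
    have hsub : (x + 1) / x - 1 = x⁻¹ := by field_simp; ring
    linarith

lemma mul_log_sub_log_le_f_add_add_f_sub {n s : ℝ} (hn : 0 < n) (hs : 0 ≤ s) (hsn : s ≤ n) :
    s * (log (n + s) - log n) ≤ f (n + s) + f (n - s) - 2 * f n := by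
  let ψ t := f (n + t) + f (n - t) - 2 * f n - t * (log (n + t) - log n)
  have hmono : MonotoneOn ψ (Icc 0 s) := by
    refine monotoneOn_of_hasDerivWithinAt_nonneg (convex_Icc 0 s) ?_
      (f' := fun t => log n - log (n - t) - t / (n + t)) (fun t ht => ?_) (fun t ht => ?_)
    · have hlog : ContinuousOn (fun t => log (n + t)) (Icc 0 s) :=
        continuousOn_log.comp (by fun_prop) fun t ht => by
          simp only [mem_compl_iff, mem_singleton_iff]; linarith [ht.1]
      have hf : Continuous f := continuous_mul_log
      fun_prop
    · rw [interior_Icc] at ht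
      obtain ⟨ht0, hts⟩ := ht
      have hd := (((hasDerivAt_f (by linarith : n + t ≠ 0)).comp_const_add n t).add
        ((hasDerivAt_f (by linarith : n - t ≠ 0)).comp_const_sub n t)).sub_const (2 * f n)
      have hd2 := (hasDerivAt_id' t).mul
        (((hasDerivAt_log (by linarith : n + t ≠ 0)).comp_const_add n t).sub_const (log n))
      exact (hd.sub hd2).hasDerivWithinAt.congr_deriv (by field_simp; ring)
    · rw [interior_Icc] at ht
      obtain ⟨ht0, hts⟩ := ht
      have hlog := log_le_sub_one_of_pos (div_pos (by linarith : 0 < n - t) hn)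
      rw [log_div (by linarith) hn.ne'] at hlog
      have h1 : t / (n + t) ≤ t / n := div_le_div_of_nonneg_left ht0.le hn (by linarith)
      have h2 : (n - t) / n - 1 = - (t / n) := by field_simp; ring
      linarith
  have := hmono ⟨le_rfl, hs⟩ ⟨hs, le_rfl⟩ hs
  simp only [ψ, add_zero, sub_zero, zero_mul] at this
  linarith

lemma mul_forwardDiff_sub_lt_f_add_add_f_sub {n A : ℝ} (hA : 0 < A) (hAn : A ≤ n) :
    A * (f (n + A + 1) - f (n + A) - f (n + 1) + f n) < f (n + A) + f (n - A) - 2 * f n := by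
  have hn : 0 < n := hA.trans_le hAn
  have hanti := strictAntiOn_f_add_one_sub_f_sub_log (mem_Ioi.mpr hn)
    (mem_Ioi.mpr (by linarith : 0 < n + A)) (by linarith : n < n + A)
  calc A * (f (n + A + 1) - f (n + A) - f (n + 1) + f n)
      < A * (log (n + A) - log n) := mul_lt_mul_of_pos_left (by linarith) hA
    _ ≤ f (n + A) + f (n - A) - 2 * f n := mul_log_sub_log_le_f_add_add_f_sub hn hA.le hAn

theorem base_case_comparison_general (k a : ℕ) (ha : a ≤ k - 2) :
    (((k : ℝ) - 2) * f ((k : ℝ) + a - 1) + ((a : ℝ) + 2) * f ((k : ℝ) - 2) ≤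
      ((k : ℝ) - 2 - a) * f ((k : ℝ) + a - 1) + ((a : ℝ) + 1) * f ((k : ℝ) - 2 + a) +
        a * f ((k : ℝ) - 1) + f ((k : ℝ) - 2 - a)) ∧
    ((a : ℝ) * (f ((k : ℝ) + a - 1) - f ((k : ℝ) + a - 2) - f ((k : ℝ) - 1) + f ((k : ℝ) - 2)) ≤
      f ((k : ℝ) - 2 + a) + f ((k : ℝ) - 2 - a) - 2 * f ((k : ℝ) - 2)) ∧
    (0 < a →
      ((k : ℝ) - 2) * f ((k : ℝ) + a - 1) + ((a : ℝ) + 2) * f ((k : ℝ) - 2) <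
        ((k : ℝ) - 2 - a) * f ((k : ℝ) + a - 1) + ((a : ℝ) + 1) * f ((k : ℝ) - 2 + a) +
          a * f ((k : ℝ) - 1) + f ((k : ℝ) - 2 - a)) ∧
    (0 < a →
      (a : ℝ) * (f ((k : ℝ) + a - 1) - f ((k : ℝ) + a - 2) - f ((k : ℝ) - 1) + f ((k : ℝ) - 2)) <
        f ((k : ℝ) - 2 + a) + f ((k : ℝ) - 2 - a) - 2 * f ((k : ℝ) - 2)) := by
  rw [show (k : ℝ) + a - 1 = k - 2 + a + 1 by ring, show (k : ℝ) + a - 2 = k - 2 + a by ring,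
    show (k : ℝ) - 1 = k - 2 + 1 by ring]
  rcases a.eq_zero_or_pos with rfl | ha0
  · refine ⟨?_, ?_, fun h => (lt_irrefl 0 h).elim, fun h => (lt_irrefl 0 h).elim⟩ <;>
      simp only [CharP.cast_eq_zero, zero_mul, zero_add, add_zero, sub_zero] <;> linarith
  have hak : (a : ℝ) + 2 ≤ k := by exact_mod_cast (by omega : a + 2 ≤ k)
  have key := mul_forwardDiff_sub_lt_f_add_add_f_sub (Nat.cast_pos.mpr ha0) (le_sub_iff_add_le.mpr hak)
  exact ⟨by linarith, key.le, fun _ => by linarith, fun _ => key⟩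

/-- For `k ≥ 3` and `0 ≤ a ≤ k-2`:
`(k-2) f(k+a-1) + (a+2) f(k-2) ≤ (k-2-a) f(k+a-1) + (a+1) f(k-2+a) + a f(k-1) + f(k-2-a)`,
strictly when `a > 0`. Equivalently,
`a [f(k+a-1) - f(k+a-2) - f(k-1) + f(k-2)] ≤ f(k-2+a) + f(k-2-a) - 2 f(k-2)`,
strictly when `a > 0`. -/
theorem base_case_comparison (k a : ℕ) (hk : 3 ≤ k) (ha : a ≤ k - 2) :
    (((k : ℝ) - 2) * f ((k : ℝ) + a - 1) + ((a : ℝ) + 2) * f ((k : ℝ) - 2) ≤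
      ((k : ℝ) - 2 - a) * f ((k : ℝ) + a - 1) + ((a : ℝ) + 1) * f ((k : ℝ) - 2 + a) +
        a * f ((k : ℝ) - 1) + f ((k : ℝ) - 2 - a)) ∧
    ((a : ℝ) * (f ((k : ℝ) + a - 1) - f ((k : ℝ) + a - 2) - f ((k : ℝ) - 1) + f ((k : ℝ) - 2)) ≤
      f ((k : ℝ) - 2 + a) + f ((k : ℝ) - 2 - a) - 2 * f ((k : ℝ) - 2)) ∧
    (0 < a →
      ((k : ℝ) - 2) * f ((k : ℝ) + a - 1) + ((a : ℝ) + 2) * f ((k : ℝ) - 2) <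
        ((k : ℝ) - 2 - a) * f ((k : ℝ) + a - 1) + ((a : ℝ) + 1) * f ((k : ℝ) - 2 + a) +
          a * f ((k : ℝ) - 1) + f ((k : ℝ) - 2 - a)) ∧
    (0 < a →
      (a : ℝ) * (f ((k : ℝ) + a - 1) - f ((k : ℝ) + a - 2) - f ((k : ℝ) - 1) + f ((k : ℝ) - 2)) <
        f ((k : ℝ) - 2 + a) + f ((k : ℝ) - 2 - a) - 2 * f ((k : ℝ) - 2)) :=
  base_case_comparison_general k a ha
end
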